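/- arXiv:2511.10551 — 2 statements merged into one kernel-verified Lean document; each statement's English description precedes it below -/
import Mathlib

section
/- Let X be a geodesic δ-hyperbolic metric space, let A be a hyperbolic isometry of X, and let L : ℝ → X be a geodesic from A⁻ to A⁺ (oriented toward A⁺). For x ∈ X, let Bus_L(x) = lim_{t→+∞} (d(L(t), x) − t), which exists because the function t ↦ d(L(t),x) − t is nonincreasing and bounded below. Then for every x ∈ X: Bus_L(x) − l_S(A) − 32δ ≤ Bus_L(A x) ≤ Bus_L(x) − l_S(A) + 32δ. -/
open Metric Filter Set Topology

/-- The Gromov product `(x|y)_z = ½(d(z,x)+d(z,y)−d(x,y))`. -/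
noncomputable def gromovProd {X : Type*} [MetricSpace X] (x y z : X) : ℝ :=
  (dist z x + dist z y - dist x y) / 2

/-- A parametrized geodesic segment from `x` to `y` (defined on `[0, dist x y]`). -/
def IsGeodesicSegment {X : Type*} [MetricSpace X] (x y : X) (f : ℝ → X) : Prop :=
  f 0 = x ∧ f (dist x y) = y ∧
    ∀ s ∈ Set.Icc (0 : ℝ) (dist x y), ∀ t ∈ Set.Icc (0 : ℝ) (dist x y),
      dist (f s) (f t) = |s - t|

/-- The metric space `X` is geodesic: any two points are joined by a geodesic segment. -/
def GeodesicMetricSpace (X : Type*) [MetricSpace X] : Prop :=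
  ∀ x y : X, ∃ f : ℝ → X, IsGeodesicSegment x y f

/-- `X` is δ-hyperbolic in the sense of Rips: every geodesic triangle is δ-thin,
i.e. each side is contained in the δ-neighbourhood of the union of the other two. -/
def RipsHyperbolic (X : Type*) [MetricSpace X] (δ : ℝ) : Prop :=
  ∀ (x y z : X) (f g h : ℝ → X),
    IsGeodesicSegment x y f → IsGeodesicSegment y z g → IsGeodesicSegment z x h →
      ∀ s ∈ Set.Icc (0 : ℝ) (dist x y),
        infDist (f s) (g '' Set.Icc 0 (dist y z) ∪ h '' Set.Icc 0 (dist z x)) ≤ δ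

/-- A (parametrized) geodesic line in `X`. -/
def IsGeodesicLine {X : Type*} [MetricSpace X] (L : ℝ → X) : Prop :=
  ∀ s t : ℝ, dist (L s) (L t) = |s - t|

/-- A (parametrized) geodesic ray in `X` (parametrized on `[0,∞)`). -/
def IsGeodesicRay {X : Type*} [MetricSpace X] (r : ℝ → X) : Prop :=
  ∀ s t : ℝ, 0 ≤ s → 0 ≤ t → dist (r s) (r t) = |s - t|

/-- `L` is a geodesic from `A⁻` to `A⁺` (oriented toward `A⁺`): it is a geodesic line
such that, with `x₀ = L 0`, the Gromov products `(Aⁿx₀ | L t)_{x₀}` tend to `+∞` as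
`min(n,t) → +∞`, and `(A⁻ⁿx₀ | L (−t))_{x₀}` tend to `+∞` as `min(n,t) → +∞`. -/
def IsGeodesicFromTo {X : Type*} [MetricSpace X] (A : X ≃ᵢ X) (L : ℝ → X) : Prop :=
  IsGeodesicLine L ∧
    (∀ M : ℝ, ∃ N : ℝ, ∀ (n : ℕ) (t : ℝ), N ≤ (n : ℝ) → N ≤ t →
      M ≤ gromovProd ((A ^ n) (L 0)) (L t) (L 0)) ∧
    (∀ M : ℝ, ∃ N : ℝ, ∀ (n : ℕ) (t : ℝ), N ≤ (n : ℝ) → N ≤ t →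
      M ≤ gromovProd ((A⁻¹ ^ n) (L 0)) (L (-t)) (L 0))

/-- An element of `F₂` is primitive if it is the image of a generator under an
automorphism of `F₂` (equivalently, it belongs to some free basis). -/
def Primitive (γ : FreeGroup (Fin 2)) : Prop :=
  ∃ φ : FreeGroup (Fin 2) ≃* FreeGroup (Fin 2), φ (FreeGroup.of 0) = γ

/-- The (reduced) word length of an element of `F₂`. -/
noncomputable def wordLength (γ : FreeGroup (Fin 2)) : ℕ := γ.toWord.length

/-- The cyclically reduced word length `‖γ‖`: the minimum of the word lengths
of the conjugates of `γ`. -/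
noncomputable def cycLength (γ : FreeGroup (Fin 2)) : ℕ :=
  sInf (Set.range fun g : FreeGroup (Fin 2) => wordLength (g * γ * g⁻¹))

/-- `γ` is cyclically reduced if its word length equals its cyclically reduced length. -/
def CyclicallyReduced (γ : FreeGroup (Fin 2)) : Prop :=
  wordLength γ = cycLength γ

section Helpers

variable {X : Type*} [MetricSpace X]

lemma gp_nonneg (x y z : X) : 0 ≤ gromovProd x y z := by
  have := dist_triangle x z y
  unfold gromovProd
  rw [dist_comm z x] at *
  linarith

lemma gp_le_left (x y z : X) : gromovProd x y z ≤ dist z x := by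
  have := dist_triangle z x y
  unfold gromovProd
  linarith

lemma gp_le_right (x y z : X) : gromovProd x y z ≤ dist z y := by
  have := dist_triangle z y x
  unfold gromovProd
  rw [dist_comm y x] at this
  linarith

lemma gp_comm (x y z : X) : gromovProd x y z = gromovProd y x z := by
  unfold gromovProd; rw [dist_comm x y]; ring

lemma gp_dist_eq (x y z : X) : dist x y = dist z x + dist z y - 2 * gromovProd x y z := by
  unfold gromovProd; ring

lemma seg_rev {x y : X} {f : ℝ → X} (hf : IsGeodesicSegment x y f) :
    IsGeodesicSegment y x (fun u => f (dist x y - u)) := by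
  obtain ⟨h0, h1, hd⟩ := hf
  refine ⟨by simpa using h1, ?_, ?_⟩
  · rw [dist_comm y x]; simpa using h0
  · intro s hs t ht
    rw [dist_comm y x] at hs ht
    have hs' : dist x y - s ∈ Set.Icc (0:ℝ) (dist x y) := ⟨by linarith [hs.2], by linarith [hs.1]⟩
    have ht' : dist x y - t ∈ Set.Icc (0:ℝ) (dist x y) := ⟨by linarith [ht.2], by linarith [ht.1]⟩
    rw [hd _ hs' _ ht']
    rw [show dist x y - s - (dist x y - t) = -(s - t) by ring, abs_neg]

end Helpers

section Hyp

variable {X : Type*} [MetricSpace X] {δ : ℝ}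

lemma thin_lemma (hδ : 0 ≤ δ) (hgeo : GeodesicMetricSpace X) (hhyp : RipsHyperbolic X δ)
    {w x z : X} {f h : ℝ → X}
    (hf : IsGeodesicSegment w x f) (hh : IsGeodesicSegment z w h)
    {s ε : ℝ} (hs0 : 0 ≤ s) (hε : 0 < ε)
    (hsm : s ≤ gromovProd x z w - δ - 2 * ε) :
    dist (f s) (h (dist z w - s)) ≤ 2 * δ + 2 * ε := by
  obtain ⟨g, hg⟩ := hgeo x z
  have hgpx := gp_le_left x z w
  have hgpz := gp_le_right x z w
  have hsx : s ≤ dist w x := by linarith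
  have hsz : s ≤ dist w z := by linarith
  have hinf := hhyp w x z f g h hf hg hh s ⟨hs0, hsx⟩
  have hne : (g '' Set.Icc 0 (dist x z) ∪ h '' Set.Icc 0 (dist z w)).Nonempty :=
    ⟨x, Or.inl ⟨0, ⟨le_refl _, dist_nonneg⟩, hg.1⟩⟩
  have hlt : infDist (f s) (g '' Set.Icc 0 (dist x z) ∪ h '' Set.Icc 0 (dist z w)) < δ + ε :=
    lt_of_le_of_lt hinf (by linarith)
  obtain ⟨q, hq, hdq⟩ := (infDist_lt_iff hne).mp hlt
  have hwf : dist w (f s) = s := by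
    have := hf.2.2 0 ⟨le_refl _, dist_nonneg⟩ s ⟨hs0, hsx⟩
    rw [hf.1] at this
    rw [dist_comm] at this ⊢
    rw [this, abs_of_nonpos (by linarith), neg_sub, sub_zero]
  rcases hq with hq | hq
  · -- q on the side from x to z : contradiction
    exfalso
    obtain ⟨u, hu, rfl⟩ := hq
    have hxq : dist x (g u) = u := by
      have := hg.2.2 0 ⟨le_refl _, dist_nonneg⟩ u hu
      rw [hg.1] at this
      rw [this, abs_of_nonpos (by linarith [hu.1]), neg_sub, sub_zero]
    have hqz : dist (g u) z = dist x z - u := by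
      have := hg.2.2 u hu (dist x z) ⟨dist_nonneg, le_refl _⟩
      rw [hg.2.1] at this
      rw [this, abs_of_nonpos (by linarith [hu.2]), neg_sub]
    have hwq : dist w (g u) ≤ s + (δ + ε) := by
      calc dist w (g u) ≤ dist w (f s) + dist (f s) (g u) := dist_triangle _ _ _
        _ ≤ s + (δ + ε) := by rw [hwf]; linarith
    have h1 : dist w x ≤ dist w (g u) + dist (g u) x := dist_triangle _ _ _
    have h2 : dist w z ≤ dist w (g u) + dist (g u) z := dist_triangle _ _ _
    rw [dist_comm (g u) x, hxq] at h1
    rw [hqz] at h2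
    have : gromovProd x z w ≤ s + δ + ε := by unfold gromovProd; linarith
    linarith
  · obtain ⟨u, hu, rfl⟩ := hq
    have hwq : dist w (h u) = dist z w - u := by
      have := hh.2.2 u hu (dist z w) ⟨dist_nonneg, le_refl _⟩
      rw [hh.2.1] at this
      rw [dist_comm]
      rw [this, abs_of_nonpos (by linarith [hu.2]), neg_sub]
    have habs : |s - (dist z w - u)| ≤ δ + ε := by
      have h1 : |dist (f s) w - dist (h u) w| ≤ dist (f s) (h u) := abs_dist_sub_le _ _ _
      rw [dist_comm (f s) w, dist_comm (h u) w, hwf, hwq] at h1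
      linarith [le_of_lt hdq, abs_le.mp h1 |>.1, abs_le.mp h1 |>.2, le_abs_self (s - (dist z w - u)), neg_abs_le (s - (dist z w - u))]
    have hmem : dist z w - s ∈ Set.Icc (0:ℝ) (dist z w) := ⟨by rw [dist_comm] at hsz; linarith, by linarith⟩
    have hstep : dist (h u) (h (dist z w - s)) = |u - (dist z w - s)| := hh.2.2 u hu _ hmem
    have : |u - (dist z w - s)| = |s - (dist z w - u)| := by
      rw [show u - (dist z w - s) = s - (dist z w - u) by ring]
    calc dist (f s) (h (dist z w - s)) ≤ dist (f s) (h u) + dist (h u) (h (dist z w - s)) :=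
          dist_triangle _ _ _
      _ ≤ (δ + ε) + (δ + ε) := by rw [hstep, this]; exact add_le_add (le_of_lt hdq) habs
      _ = 2 * δ + 2 * ε := by ring

lemma gromov_four (hδ : 0 ≤ δ) (hgeo : GeodesicMetricSpace X) (hhyp : RipsHyperbolic X δ)
    (w x y z : X) :
    min (gromovProd x y w) (gromovProd y z w) - 3 * δ ≤ gromovProd x z w := by
  have key : ∀ ε : ℝ, 0 < ε → min (gromovProd x y w) (gromovProd y z w) - 3 * δ ≤ gromovProd x z w + ε := by
    intro ε hε
    set ε' := ε / 4 with hε'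
    have hε'pos : 0 < ε' := by positivity
    set a := gromovProd x y w with ha
    set c := gromovProd y z w with hc
    set m := min a c - δ - 2 * ε' with hm
    rcases lt_or_ge m 0 with hm0 | hm0
    · have := gp_nonneg x z w
      have hminle : min a c ≤ δ + 2 * ε' := by linarith
      linarith
    · obtain ⟨f, hf⟩ := hgeo w x
      obtain ⟨g, hg⟩ := hgeo w y
      obtain ⟨k, hk⟩ := hgeo w z
      have hgrev := seg_rev hg
      have hkrev := seg_rev hk
      have hmin1 : m ≤ gromovProd x y w - δ - 2 * ε' := by
        have := min_le_left a c; rw [hm]; linarith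
      have hmin2 : m ≤ gromovProd y z w - δ - 2 * ε' := by
        have := min_le_right a c; rw [hm]; linarith
      -- first pair: triangle (w, x, y)
      have t1 := thin_lemma hδ hgeo hhyp hf hgrev hm0 hε'pos hmin1
      have e1 : g (dist w y - (dist y w - m)) = g m := by
        rw [dist_comm y w, show dist w y - (dist w y - m) = m by ring]
      rw [e1] at t1
      -- second pair: triangle (w, y, z)
      have t2 := thin_lemma hδ hgeo hhyp hg hkrev hm0 hε'pos hmin2
      have e2 : k (dist w z - (dist z w - m)) = k m := by
        rw [dist_comm z w, show dist w z - (dist w z - m) = m by ring]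
      rw [e2] at t2
      have hma : m ≤ dist w x := le_trans (by rw [hm]; linarith [min_le_left a c, gp_le_left x y w]) (le_refl _)
      have hmc : m ≤ dist w z := by
        have := gp_le_right y z w
        have := min_le_right a c
        rw [hm]; linarith
      have hxf : dist x (f m) = dist w x - m := by
        have := hf.2.2 (dist w x) ⟨dist_nonneg, le_refl _⟩ m ⟨hm0, hma⟩
        rw [hf.2.1] at this
        rw [this, abs_of_nonneg (by linarith)]
      have hkz : dist (k m) z = dist w z - m := by
        have := hk.2.2 m ⟨hm0, hmc⟩ (dist w z) ⟨dist_nonneg, le_refl _⟩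
        rw [hk.2.1] at this
        rw [this, abs_of_nonpos (by linarith), neg_sub]
      have hchain : dist x z ≤ (dist w x - m) + (2*δ+2*ε') + (2*δ+2*ε') + (dist w z - m) := by
        calc dist x z ≤ dist x (f m) + dist (f m) z := dist_triangle _ _ _
          _ ≤ dist x (f m) + (dist (f m) (g m) + dist (g m) z) := by
              linarith [dist_triangle (f m) (g m) z]
          _ ≤ dist x (f m) + (dist (f m) (g m) + (dist (g m) (k m) + dist (k m) z)) := by
              linarith [dist_triangle (g m) (k m) z]
          _ ≤ (dist w x - m) + (2*δ+2*ε') + (2*δ+2*ε') + (dist w z - m) := by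
              rw [hxf, hkz]; linarith
      have : m - 2*δ - 2*ε' ≤ gromovProd x z w := by unfold gromovProd; linarith
      rw [hm, hε'] at this
      linarith
  by_contra hcon
  push_neg at hcon
  have := key ((min (gromovProd x y w) (gromovProd y z w) - 3 * δ - gromovProd x z w)/2) (by linarith)
  linarith

end Hyp

section Orbit

variable {X : Type*} [MetricSpace X]

lemma isom_pow_succ (A : X ≃ᵢ X) (n : ℕ) (u : X) : (A ^ (n + 1)) u = A ((A ^ n) u) := by
  rw [pow_succ']; rfl

lemma isom_inv_apply (A : X ≃ᵢ X) (u : X) : A (A⁻¹ u) = u := by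
  have : (A * A⁻¹) u = u := by rw [mul_inv_cancel]; rfl
  rwa [IsometryEquiv.mul_apply] at this

lemma isom_pow_inv_apply (A : X ≃ᵢ X) (n : ℕ) (u : X) : (A ^ n) ((A⁻¹ ^ n) u) = u := by
  have : ((A ^ n) * (A⁻¹ ^ n)) u = u := by
    rw [inv_pow, mul_inv_cancel]; rfl
  rwa [IsometryEquiv.mul_apply] at this

noncomputable def dSeq {X : Type*} [MetricSpace X] (A : X ≃ᵢ X) (b : X) (n : ℕ) : ℝ :=
  dist ((A ^ n) b) b

lemma dSeq_shift (A : X ≃ᵢ X) (b : X) (m n : ℕ) :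
    dist ((A ^ (m + n)) b) ((A ^ n) b) = dSeq A b m := by
  have h1 : (A ^ (m + n)) b = (A ^ n) ((A ^ m) b) := by
    rw [add_comm, pow_add, IsometryEquiv.mul_apply]
  rw [h1, IsometryEquiv.dist_eq]
  rfl

lemma dSeq_sub (A : X ≃ᵢ X) (b : X) (m n : ℕ) :
    dSeq A b (m + n) ≤ dSeq A b m + dSeq A b n := by
  have h := dist_triangle ((A ^ (m + n)) b) ((A ^ n) b) b
  rw [dSeq_shift] at h
  exact h

lemma dSeq_inv (A : X ≃ᵢ X) (b : X) (n : ℕ) :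
    dist ((A⁻¹ ^ n) b) b = dSeq A b n := by
  have : dist ((A ^ n) ((A⁻¹ ^ n) b)) ((A ^ n) b) = dist ((A⁻¹ ^ n) b) b :=
    IsometryEquiv.dist_eq _ _ _
  rw [isom_pow_inv_apply] at this
  rw [← this, dist_comm]
  rfl

lemma dSeq_join (A : X ≃ᵢ X) (b : X) (m n : ℕ) :
    dist ((A ^ m) b) ((A⁻¹ ^ n) b) = dSeq A b (m + n) := by
  have h1 : dist ((A ^ n) ((A ^ m) b)) ((A ^ n) ((A⁻¹ ^ n) b)) = dist ((A ^ m) b) ((A⁻¹ ^ n) b) :=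
    IsometryEquiv.dist_eq _ _ _
  rw [isom_pow_inv_apply] at h1
  have h2 : (A ^ n) ((A ^ m) b) = (A ^ (m + n)) b := by
    rw [add_comm, pow_add, IsometryEquiv.mul_apply]
  rw [h2] at h1
  rw [← h1]
  rfl

end Orbit

section Fekete

open Filter

lemma fekete_mul_tendsto {n : ℕ} (hn : 1 ≤ n) :
    Tendsto (fun k : ℕ => (k + 1) * n) atTop atTop := by
  apply tendsto_atTop_atTop.mpr
  intro b
  exact ⟨b, fun a ha => le_trans (le_trans ha (Nat.le_succ a)) (Nat.le_mul_of_pos_right _ hn)⟩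

lemma fekete_lower {u : ℕ → ℝ} {l : ℝ}
    (hsub : ∀ m n, u (m + n) ≤ u m + u n)
    (hlim : Tendsto (fun n : ℕ => u n / n) atTop (𝓝 l)) :
    ∀ n : ℕ, 1 ≤ n → (n : ℝ) * l ≤ u n := by
  intro n hn
  have hmul : ∀ k : ℕ, u ((k + 1) * n) ≤ (k + 1) * u n := by
    intro k
    induction k with
    | zero => simp
    | succ k ih =>
      have : ((k + 1) + 1) * n = (k + 1) * n + n := by ring
      rw [this]
      calc u ((k + 1) * n + n) ≤ u ((k + 1) * n) + u n := hsub _ _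
        _ ≤ (k + 1) * u n + u n := by linarith
        _ = ((k:ℝ) + 1 + 1) * u n := by ring
        _ = ((k + 1 : ℕ) + 1 : ℝ) * u n := by push_cast; ring
  have hcomp : Tendsto (fun k : ℕ => u ((k + 1) * n) / (((k + 1) * n : ℕ) : ℝ)) atTop (𝓝 l) :=
    hlim.comp (fekete_mul_tendsto hn)
  have hle : l ≤ u n / n := by
    apply le_of_tendsto hcomp
    filter_upwards with k
    have hpos : (0:ℝ) < ((k + 1) * n : ℕ) := by
      have : 0 < (k + 1) * n := Nat.mul_pos (Nat.succ_pos k) hn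
      exact_mod_cast this
    have hnpos : (0:ℝ) < (n:ℝ) := by exact_mod_cast hn
    rw [div_le_div_iff₀ hpos hnpos]
    have hcast : (((k + 1) * n : ℕ) : ℝ) = ((k:ℝ) + 1) * n := by push_cast; ring
    rw [hcast]
    calc u ((k + 1) * n) * n ≤ (((k:ℝ) + 1) * u n) * n := by
          have := hmul k
          nlinarith [hnpos]
      _ = u n * (((k:ℝ) + 1) * n) := by ring
  rw [le_div_iff₀ (by exact_mod_cast hn : (0:ℝ) < (n:ℝ))] at hle
  linarith

lemma fekete_upper {u : ℕ → ℝ} {l C N : ℝ} (hC : 0 ≤ C)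
    (hsup : ∀ m n : ℕ, N ≤ (m : ℝ) → N ≤ (n : ℝ) → u m + u n - C ≤ u (m + n))
    (hlim : Tendsto (fun n : ℕ => u n / n) atTop (𝓝 l)) :
    ∀ n : ℕ, 1 ≤ n → N ≤ (n : ℝ) → u n ≤ (n : ℝ) * l + C := by
  intro n hn hNn
  have hmul : ∀ k : ℕ, ((k:ℝ) + 1) * (u n - C) ≤ u ((k + 1) * n) := by
    intro k
    induction k with
    | zero => simp; linarith
    | succ k ih =>
      have he : (k + 1 + 1) * n = (k + 1) * n + n := by ring
      rw [he]
      have hN' : N ≤ (((k + 1) * n : ℕ) : ℝ) := by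
        have : (n:ℝ) ≤ (((k + 1) * n : ℕ) : ℝ) := by
          have : n ≤ (k + 1) * n := Nat.le_mul_of_pos_left n (Nat.succ_pos k)
          exact_mod_cast this
        linarith
      have := hsup ((k + 1) * n) n hN' hNn
      push_cast
      push_cast at ih
      linarith
  have hcomp : Tendsto (fun k : ℕ => u ((k + 1) * n) / (((k + 1) * n : ℕ) : ℝ)) atTop (𝓝 l) :=
    hlim.comp (fekete_mul_tendsto hn)
  have hge : (u n - C) / n ≤ l := by
    apply ge_of_tendsto hcomp
    filter_upwards with k
    have hnpos : (0:ℝ) < (n:ℝ) := by exact_mod_cast hn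
    have hpos : (0:ℝ) < (((k + 1) * n : ℕ) : ℝ) := by
      have : 0 < (k + 1) * n := Nat.mul_pos (Nat.succ_pos k) hn
      exact_mod_cast this
    rw [div_le_div_iff₀ hnpos hpos]
    have hcast : (((k + 1) * n : ℕ) : ℝ) = ((k:ℝ) + 1) * n := by push_cast; ring
    rw [hcast]
    have := hmul k
    nlinarith [hnpos]
  rw [div_le_iff₀ (by exact_mod_cast hn : (0:ℝ) < (n:ℝ))] at hge
  linarith

end Fekete

/-- Busemann function along the axis. If `A` is a hyperbolic isometry,
`L` a geodesic from `A⁻` to `A⁺` (oriented toward `A⁺`), and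
`Bus_L(x) = lim_{t→+∞} (d(L t, x) − t)`, then for every `x`:
`Bus_L(x) − l_S(A) − 32δ ≤ Bus_L(A x) ≤ Bus_L(x) − l_S(A) + 32δ`. -/
theorem busemann_along_axis
    {X : Type*} [MetricSpace X] (δ : ℝ) (hδ : 0 ≤ δ)
    (hgeo : GeodesicMetricSpace X) (hhyp : RipsHyperbolic X δ)
    (A : X ≃ᵢ X) (x₀ : X) (lA : ℝ)
    (hlA : Tendsto (fun n : ℕ => dist ((A ^ n) x₀) x₀ / n) atTop (𝓝 lA))
    (hAhyp : 0 < lA)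
    (L : ℝ → X) (hL : IsGeodesicFromTo A L)
    (Bus : X → ℝ)
    (hBus : ∀ x : X, Tendsto (fun t : ℝ => dist (L t) x - t) atTop (𝓝 (Bus x))) :
    ∀ x : X, Bus x - lA - 32 * δ ≤ Bus (A x) ∧ Bus (A x) ≤ Bus x - lA + 32 * δ := by
  obtain ⟨hLine, hP1, hP2⟩ := hL
  -- basic facts about L
  have hdL0 : ∀ t : ℝ, 0 ≤ t → dist (L 0) (L t) = t := by
    intro t ht
    rw [hLine 0 t, abs_of_nonpos (by linarith), neg_sub, sub_zero]
  have hgpLL : ∀ s t : ℝ, 0 ≤ s → s ≤ t → gromovProd (L s) (L t) (L 0) = s := by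
    intro s t hs hst
    unfold gromovProd
    rw [hdL0 s hs, hdL0 t (le_trans hs hst), hLine s t,
      abs_of_nonpos (by linarith)]
    ring
  have hgpLneg : ∀ s t : ℝ, 0 ≤ s → 0 ≤ t → gromovProd (L s) (L (-t)) (L 0) = 0 := by
    intro s t hs ht
    unfold gromovProd
    rw [hdL0 s hs, hLine 0 (-t), hLine s (-t),
      abs_of_nonneg (by linarith : (0:ℝ) ≤ 0 - -t), abs_of_nonneg (by linarith : (0:ℝ) ≤ s - -t)]
    ring
  -- Busemann basics
  have hBle : ∀ (y : X) (t : ℝ), Bus y ≤ dist (L t) y - t := by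
    intro y t
    refine le_of_tendsto (hBus y) (eventually_atTop.mpr ⟨t, fun t' ht' => ?_⟩)
    have h1 := dist_triangle (L t') (L t) y
    rw [hLine t' t, abs_of_nonneg (by linarith)] at h1
    linarith
  have hBlip : ∀ y z : X, Bus y ≤ Bus z + dist z y := by
    intro y z
    refine le_of_tendsto_of_tendsto' (hBus y) ((hBus z).add_const (dist z y)) fun t => ?_
    have := dist_triangle (L t) z y
    linarith
  -- convergence of dSeq/n
  have hdtend : Tendsto (fun n : ℕ => dSeq A (L 0) n / n) atTop (𝓝 lA) := by
    apply hlA.congr_dist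
    have hbd : ∀ n : ℕ, dist (dist ((A ^ n) x₀) x₀ / (n:ℝ)) (dSeq A (L 0) n / n)
        ≤ 2 * dist (L 0) x₀ / n := by
      intro n
      rcases Nat.eq_zero_or_pos n with rfl | hn
      · simp [dSeq]
      have hnum : |dist ((A ^ n) x₀) x₀ - dSeq A (L 0) n| ≤ 2 * dist (L 0) x₀ := by
        have ha := dist_triangle ((A ^ n) (L 0)) ((A ^ n) x₀) (L 0)
        have hb := dist_triangle ((A ^ n) x₀) x₀ (L 0)
        have hc := dist_triangle ((A ^ n) x₀) ((A ^ n) (L 0)) x₀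
        have hd := dist_triangle ((A ^ n) (L 0)) (L 0) x₀
        have h3 : dist ((A ^ n) (L 0)) ((A ^ n) x₀) = dist (L 0) x₀ := IsometryEquiv.dist_eq _ _ _
        have h6 : dist ((A ^ n) x₀) ((A ^ n) (L 0)) = dist x₀ (L 0) := IsometryEquiv.dist_eq _ _ _
        have h7 : dist x₀ (L 0) = dist (L 0) x₀ := dist_comm _ _
        unfold dSeq
        rw [abs_le]
        constructor <;> linarith
      have hnpos : (0:ℝ) < (n:ℝ) := by exact_mod_cast hn
      rw [Real.dist_eq, div_sub_div_same, abs_div,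
        abs_of_nonneg (by positivity : (0:ℝ) ≤ (n:ℝ))]
      exact div_le_div_of_nonneg_right hnum hnpos.le
    have h0 : Tendsto (fun n : ℕ => 2 * dist (L 0) x₀ / n) atTop (𝓝 0) :=
      tendsto_const_div_atTop_nhds_zero_nat _
    exact squeeze_zero (fun n => dist_nonneg) hbd h0
  have hlow : ∀ n : ℕ, 1 ≤ n → (n : ℝ) * lA ≤ dSeq A (L 0) n :=
    fekete_lower (dSeq_sub A (L 0)) hdtend
  -- products with the two rays
  have hmin : ∀ (y : X) (t : ℝ), 0 ≤ t →
      min (gromovProd y (L t) (L 0)) (gromovProd y (L (-t)) (L 0)) ≤ 3 * δ := by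
    intro y t ht
    have h4 := gromov_four hδ hgeo hhyp (L 0) (L t) y (L (-t))
    rw [gp_comm (L t) y] at h4
    have h0 := hgpLneg t t ht ht
    linarith [min_le_left (gromovProd y (L t) (L 0)) (gromovProd y (L (-t)) (L 0)),
      min_le_right (gromovProd y (L t) (L 0)) (gromovProd y (L (-t)) (L 0)),
      le_min (min_le_left (gromovProd y (L t) (L 0)) (gromovProd y (L (-t)) (L 0)))
        (min_le_right (gromovProd y (L t) (L 0)) (gromovProd y (L (-t)) (L 0))), h4, h0,
      min_le_left (gromovProd (L t) y (L 0)) (gromovProd y (L (-t)) (L 0))]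
  -- superadditivity of dSeq
  obtain ⟨Na, hNa⟩ := hP1 (3 * δ + 1)
  obtain ⟨Nb, hNb⟩ := hP2 (6 * δ + 1)
  set N₁ : ℝ := max Na Nb with hN₁
  have hgp6 : ∀ n m : ℕ, N₁ ≤ (n:ℝ) → N₁ ≤ (m:ℝ) →
      gromovProd ((A ^ m) (L 0)) ((A⁻¹ ^ n) (L 0)) (L 0) ≤ 6 * δ := by
    intro n m hn hm
    set t : ℝ := max (max Na Nb) 0 with ht
    have ht0 : 0 ≤ t := le_max_right _ _
    have hta : Na ≤ t := le_trans (le_max_left _ _) (le_max_left _ _)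
    have htb : Nb ≤ t := le_trans (le_max_right _ _) (le_max_left _ _)
    have h1 : 3 * δ + 1 ≤ gromovProd ((A ^ m) (L 0)) (L t) (L 0) :=
      hNa m t (le_trans (le_max_left _ _) hm) hta
    have h2 := hmin ((A ^ m) (L 0)) t ht0
    have h3 : gromovProd ((A ^ m) (L 0)) (L (-t)) (L 0) ≤ 3 * δ := by
      rcases min_le_iff.mp h2 with h | h
      · linarith
      · exact h
    have h4 : 6 * δ + 1 ≤ gromovProd ((A⁻¹ ^ n) (L 0)) (L (-t)) (L 0) :=
      hNb n t (le_trans (le_max_right _ _) hn) htb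
    have h5 := gromov_four hδ hgeo hhyp (L 0) ((A ^ m) (L 0)) ((A⁻¹ ^ n) (L 0)) (L (-t))
    by_contra hcon
    push_neg at hcon
    have : 6 * δ < min (gromovProd ((A ^ m) (L 0)) ((A⁻¹ ^ n) (L 0)) (L 0))
        (gromovProd ((A⁻¹ ^ n) (L 0)) (L (-t)) (L 0)) := lt_min hcon (by linarith)
    linarith
  have hsup : ∀ m n : ℕ, N₁ ≤ (m:ℝ) → N₁ ≤ (n:ℝ) →
      dSeq A (L 0) m + dSeq A (L 0) n - 12 * δ ≤ dSeq A (L 0) (m + n) := by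
    intro m n hm hn
    have hj := dSeq_join A (L 0) m n
    have he := gp_dist_eq ((A ^ m) (L 0)) ((A⁻¹ ^ n) (L 0)) (L 0)
    have hd1 : dist (L 0) ((A ^ m) (L 0)) = dSeq A (L 0) m := by rw [dist_comm]; rfl
    have hd2 : dist (L 0) ((A⁻¹ ^ n) (L 0)) = dSeq A (L 0) n := by rw [dist_comm]; exact dSeq_inv A (L 0) n
    have h6 := hgp6 n m hn hm
    rw [hd1, hd2, hj] at he
    linarith
  have hupp : ∀ n : ℕ, 1 ≤ n → N₁ ≤ (n:ℝ) → dSeq A (L 0) n ≤ (n:ℝ) * lA + 12 * δ :=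
    fekete_upper (by linarith) hsup hdtend
  set Nr : ℝ := max N₁ 1 with hNr
  have hNr1 : ∀ n : ℕ, Nr ≤ (n:ℝ) → 1 ≤ n := by
    intro n hn
    have : (1:ℝ) ≤ (n:ℝ) := le_trans (le_max_right _ _) hn
    exact_mod_cast this
  have hNrN₁ : ∀ n : ℕ, Nr ≤ (n:ℝ) → N₁ ≤ (n:ℝ) := fun n hn => le_trans (le_max_left _ _) hn
  have hstep_up : ∀ n : ℕ, Nr ≤ (n:ℝ) →
      lA - 12 * δ ≤ dSeq A (L 0) (n + 1) - dSeq A (L 0) n := by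
    intro n hn
    have h1 := hlow (n + 1) (Nat.succ_le_succ (Nat.zero_le n))
    have h2 := hupp n (hNr1 n hn) (hNrN₁ n hn)
    push_cast at h1
    linarith
  have hstep_dn : ∀ n : ℕ, Nr ≤ (n:ℝ) →
      -lA - 12 * δ ≤ dSeq A (L 0) n - dSeq A (L 0) (n + 1) := by
    intro n hn
    have h1 := hlow n (hNr1 n hn)
    have h2 := hupp (n + 1) (Nat.succ_le_succ (Nat.zero_le n))
      (by push_cast; linarith [hNrN₁ n hn])
    push_cast at h2
    linarith
  -- product of L s with far orbit points
  have hgp_ray : ∀ s : ℝ, 0 ≤ s → ∃ Ns : ℝ, ∀ m : ℕ, Ns ≤ (m:ℝ) →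
      s - 3 * δ ≤ gromovProd (L s) ((A ^ m) (L 0)) (L 0) := by
    intro s hs
    obtain ⟨N, hN⟩ := hP1 s
    refine ⟨N, fun m hm => ?_⟩
    set t1 : ℝ := max N s with ht1
    have ha : s ≤ gromovProd ((A ^ m) (L 0)) (L t1) (L 0) := hN m t1 hm (le_max_left _ _)
    have h4 := gromov_four hδ hgeo hhyp (L 0) (L s) (L t1) ((A ^ m) (L 0))
    rw [hgpLL s t1 hs (le_max_right _ _)] at h4
    rw [gp_comm (L t1) ((A ^ m) (L 0))] at h4
    have : s ≤ min s (gromovProd ((A ^ m) (L 0)) (L t1) (L 0)) := le_min (le_refl _) ha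
    linarith
  -- KEY BOUND (positive direction)
  have keyPos : ∀ s : ℝ, 0 ≤ s → Bus (A (L s)) ≤ -s - lA + 24 * δ := by
    intro s hs
    obtain ⟨Ns, hNs⟩ := hgp_ray s hs
    set D : ℝ := dist (L 0) (A (L s)) with hD
    obtain ⟨N₂, hN₂⟩ := hP1 ((D + s + lA) / 2)
    obtain ⟨n, hn⟩ := exists_nat_ge (max (max Ns Nr) N₂)
    have hnNs : Ns ≤ (n:ℝ) := le_trans (le_trans (le_max_left _ _) (le_max_left _ _)) hn
    have hnNr : Nr ≤ (n:ℝ) := le_trans (le_trans (le_max_right _ _) (le_max_left _ _)) hn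
    have hnN2 : N₂ ≤ (n:ℝ) := le_trans (le_max_right _ _) hn
    have h1 := hNs n hnNs
    have e2 : dist (A (L s)) ((A ^ (n + 1)) (L 0)) = dist (L s) ((A ^ n) (L 0)) := by
      rw [isom_pow_succ, IsometryEquiv.dist_eq]
    have e3 := gp_dist_eq (L s) ((A ^ n) (L 0)) (L 0)
    have ed1 : dist (L 0) (L s) = s := hdL0 s hs
    have ed2 : dist (L 0) ((A ^ n) (L 0)) = dSeq A (L 0) n := by rw [dist_comm]; rfl
    have e4 : dist (A (L s)) ((A ^ (n + 1)) (L 0)) ≤ dSeq A (L 0) n - s + 6 * δ := by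
      rw [e2, e3, ed1, ed2]; linarith
    have estep := hstep_up n hnNr
    have e5 := gp_dist_eq (A (L s)) ((A ^ (n + 1)) (L 0)) (L 0)
    have ed3 : dist (L 0) ((A ^ (n + 1)) (L 0)) = dSeq A (L 0) (n + 1) := by rw [dist_comm]; rfl
    rw [ed3, ← hD] at e5
    have h2 : (D + s + lA) / 2 - 9 * δ ≤ gromovProd (A (L s)) ((A ^ (n + 1)) (L 0)) (L 0) := by
      linarith
    set t : ℝ := max N₂ 0 with htdef
    have ht0 : 0 ≤ t := le_max_right _ _
    have hY := hN₂ (n + 1) t (by push_cast; linarith) (le_max_left _ _)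
    have h4 := gromov_four hδ hgeo hhyp (L 0) (A (L s)) ((A ^ (n + 1)) (L 0)) (L t)
    have hm2 : (D + s + lA) / 2 - 9 * δ ≤
        min (gromovProd (A (L s)) ((A ^ (n + 1)) (L 0)) (L 0))
          (gromovProd ((A ^ (n + 1)) (L 0)) (L t) (L 0)) := le_min h2 (by linarith)
    have h3 : (D + s + lA) / 2 - 12 * δ ≤ gromovProd (A (L s)) (L t) (L 0) := by linarith
    have h5 := hBle (A (L s)) t
    have e6 := gp_dist_eq (L t) (A (L s)) (L 0)
    have ed4 : dist (L 0) (L t) = t := hdL0 t ht0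
    rw [ed4, ← hD, gp_comm (L t) (A (L s))] at e6
    linarith
  -- KEY BOUND (negative direction)
  have keyNeg : ∀ t₀ : ℝ, 0 ≤ t₀ → Bus (A⁻¹ (L t₀)) ≤ -t₀ + lA + 24 * δ := by
    intro t₀ ht₀
    obtain ⟨Ns, hNs⟩ := hgp_ray t₀ ht₀
    set D' : ℝ := dist (L 0) (A⁻¹ (L t₀)) with hD'
    obtain ⟨N₂, hN₂⟩ := hP1 ((D' + t₀ - lA) / 2)
    obtain ⟨n, hn⟩ := exists_nat_ge (max (max Ns Nr) N₂)
    have hnNs : Ns ≤ (n:ℝ) := le_trans (le_trans (le_max_left _ _) (le_max_left _ _)) hn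
    have hnNr : Nr ≤ (n:ℝ) := le_trans (le_trans (le_max_right _ _) (le_max_left _ _)) hn
    have hnN2 : N₂ ≤ (n:ℝ) := le_trans (le_max_right _ _) hn
    have h1 := hNs (n + 1) (by push_cast; linarith)
    have e2 : dist (A⁻¹ (L t₀)) ((A ^ n) (L 0)) = dist (L t₀) ((A ^ (n + 1)) (L 0)) := by
      rw [← IsometryEquiv.dist_eq A (A⁻¹ (L t₀)) ((A ^ n) (L 0)), isom_inv_apply,
        ← isom_pow_succ]
    have e3 := gp_dist_eq (L t₀) ((A ^ (n + 1)) (L 0)) (L 0)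
    have ed1 : dist (L 0) (L t₀) = t₀ := hdL0 t₀ ht₀
    have ed2 : dist (L 0) ((A ^ (n + 1)) (L 0)) = dSeq A (L 0) (n + 1) := by rw [dist_comm]; rfl
    have e4 : dist (A⁻¹ (L t₀)) ((A ^ n) (L 0)) ≤ dSeq A (L 0) (n + 1) - t₀ + 6 * δ := by
      rw [e2, e3, ed1, ed2]; linarith
    have estep := hstep_dn n hnNr
    have e5 := gp_dist_eq (A⁻¹ (L t₀)) ((A ^ n) (L 0)) (L 0)
    have ed3 : dist (L 0) ((A ^ n) (L 0)) = dSeq A (L 0) n := by rw [dist_comm]; rfl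
    rw [ed3, ← hD'] at e5
    have h2 : (D' + t₀ - lA) / 2 - 9 * δ ≤ gromovProd (A⁻¹ (L t₀)) ((A ^ n) (L 0)) (L 0) := by
      linarith
    set t : ℝ := max N₂ 0 with htdef
    have ht0 : 0 ≤ t := le_max_right _ _
    have hY := hN₂ n t hnN2 (le_max_left _ _)
    have h4 := gromov_four hδ hgeo hhyp (L 0) (A⁻¹ (L t₀)) ((A ^ n) (L 0)) (L t)
    have hm2 : (D' + t₀ - lA) / 2 - 9 * δ ≤
        min (gromovProd (A⁻¹ (L t₀)) ((A ^ n) (L 0)) (L 0))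
          (gromovProd ((A ^ n) (L 0)) (L t) (L 0)) := le_min h2 (by linarith)
    have h3 : (D' + t₀ - lA) / 2 - 12 * δ ≤ gromovProd (A⁻¹ (L t₀)) (L t) (L 0) := by linarith
    have h5 := hBle (A⁻¹ (L t₀)) t
    have e6 := gp_dist_eq (L t) (A⁻¹ (L t₀)) (L 0)
    have ed4 : dist (L 0) (L t) = t := hdL0 t ht0
    rw [ed4, ← hD', gp_comm (L t) (A⁻¹ (L t₀))] at e6
    linarith
  -- conclusion
  intro x
  constructor
  · have hev : ∀ t : ℝ, 0 ≤ t → Bus x - lA - 24 * δ ≤ dist (L t) (A x) - t := by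
      intro t ht
      have h1 := hBlip x (A⁻¹ (L t))
      have h2 := keyNeg t ht
      have e : dist (L t) (A x) = dist (A⁻¹ (L t)) x := by
        rw [← IsometryEquiv.dist_eq A (A⁻¹ (L t)) x, isom_inv_apply]
      linarith
    have hge := ge_of_tendsto (hBus (A x)) (eventually_atTop.mpr ⟨0, hev⟩)
    linarith
  · have hev2 : ∀ s : ℝ, 0 ≤ s → Bus (A x) ≤ dist (L s) x - s - lA + 24 * δ := by
      intro s hs
      have h1 := hBlip (A x) (A (L s))
      rw [IsometryEquiv.dist_eq] at h1
      have h2 := keyPos s hs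
      linarith
    have hT : Tendsto (fun s : ℝ => dist (L s) x - s - lA + 24 * δ) atTop
        (𝓝 (Bus x - lA + 24 * δ)) := ((hBus x).sub_const lA).add_const _
    have hge := ge_of_tendsto hT (eventually_atTop.mpr ⟨0, hev2⟩)
    linarith
end

section
/- Let X be a geodesic δ-hyperbolic metric space, let A and B be isometries of X, and let L_A, L_B : ℝ → X be geodesic lines such that dist(A x, L_A(ℝ)) ≤ 2δ and dist(A⁻¹ x, L_A(ℝ)) ≤ 2δ for every x ∈ L_A(ℝ), and dist(B x, L_B(ℝ)) ≤ 2δ and dist(B⁻¹ x, L_B(ℝ)) ≤ 2δ for every x ∈ L_B(ℝ). Let x_A ∈ L_A(ℝ) and x_B ∈ L_B(ℝ) be points at which the distance between the two lines is attained, i.e. d(x_A, x_B) = dist(L_A(ℝ), L_B(ℝ)). Then the four Gromov products (x_B | A x_A)_{x_A}, (x_A | A x_B)_{A x_A}, (x_A | B x_B)_{x_B}, and (x_B | B x_A)_{B x_B} are all at most 8δ. -/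
open Metric Filter Set Topology

private lemma gromovProd_nonneg' {X : Type*} [MetricSpace X] (x y z : X) :
    0 ≤ gromovProd x y z := by
  have h := dist_triangle x z y
  rw [dist_comm x z] at h
  unfold gromovProd
  linarith

private lemma gromovProd_le_dist' {X : Type*} [MetricSpace X] (x y z : X) :
    gromovProd x y z ≤ dist z x := by
  have h := dist_triangle z x y
  unfold gromovProd
  linarith

private lemma gromovProd_lipschitz' {X : Type*} [MetricSpace X] (x y y' z : X) :
    gromovProd x y z ≤ gromovProd x y' z + dist y y' := by
  have h1 : dist z y ≤ dist z y' + dist y' y := dist_triangle z y' y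
  have h2 : dist x y' ≤ dist x y + dist y y' := dist_triangle x y y'
  rw [dist_comm y' y] at h1
  unfold gromovProd
  linarith

/-- A geodesic segment between two points of a geodesic line, lying on the line. -/
private lemma segment_on_line' {X : Type*} [MetricSpace X] {L : ℝ → X}
    (hL : IsGeodesicLine L) (a b : ℝ) :
    ∃ h : ℝ → X, IsGeodesicSegment (L a) (L b) h ∧ ∀ s, h s ∈ Set.range L := by
  set e : ℝ := if a ≤ b then 1 else -1 with he
  refine ⟨fun s => L (a + s * e), ⟨?_, ?_, ?_⟩, fun s => ⟨a + s * e, rfl⟩⟩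
  · simp
  · have hd : dist (L a) (L b) = |a - b| := hL a b
    rw [hd]
    by_cases hab : a ≤ b
    · have h1 : |a - b| = b - a := by rw [abs_sub_comm]; exact abs_of_nonneg (by linarith)
      simp [he, hab, h1]
    · have h1 : |a - b| = a - b := abs_of_nonneg (by linarith [lt_of_not_ge hab])
      simp only [he, if_neg hab, h1]
      ring_nf
  · intro s _ u _
    rw [hL (a + s * e) (a + u * e)]
    have hee : |e| = 1 := by
      by_cases hab : a ≤ b <;> simp [he, hab]
    have h2 : a + s * e - (a + u * e) = (s - u) * e := by ring
    rw [h2, abs_mul, hee, mul_one]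

/-- Key lemma: the Gromov product `(xB | p)_{xA}` is at most `2δ` whenever `p` lies on
the line `LA` and `xA ∈ LA`, `xB ∈ LB` realize the distance between the two lines. -/
private lemma key_gromov' {X : Type*} [MetricSpace X] {d : ℝ}
    (hgeo : GeodesicMetricSpace X) (hhyp : RipsHyperbolic X d)
    {LA LB : ℝ → X} (hLA : IsGeodesicLine LA)
    {xA xB : X} (hxA : xA ∈ Set.range LA) (hxB : xB ∈ Set.range LB)
    (hmin : ∀ p ∈ Set.range LA, ∀ q ∈ Set.range LB, dist xA xB ≤ dist p q)
    {p : X} (hp : p ∈ Set.range LA) : gromovProd xB p xA ≤ 2 * d := by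
  set G := gromovProd xB p xA with hG
  set D := dist xA xB with hD
  have hGnn : 0 ≤ G := gromovProd_nonneg' xB p xA
  have hGD : G ≤ D := gromovProd_le_dist' xB p xA
  have hGdef : G = (D + dist xA p - dist xB p) / 2 := rfl
  -- it suffices to prove G ≤ 2d + ε for every ε > 0
  refine le_of_forall_pos_le_add fun ε hε => ?_
  obtain ⟨f, hf⟩ := hgeo xA xB
  obtain ⟨g, hg⟩ := hgeo xB p
  obtain ⟨a, ha⟩ := hp
  obtain ⟨b, hb⟩ := hxA
  obtain ⟨h, hh, hhL⟩ := segment_on_line' hLA a b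
  rw [ha, hb] at hh
  set t := G / 2 with ht
  have hDnn : 0 ≤ D := dist_nonneg
  have htmem : t ∈ Set.Icc (0 : ℝ) D := ⟨by linarith, by linarith⟩
  have hinf := hhyp xA xB p f g h hf hg hh t htmem
  have hSne : (g '' Set.Icc 0 (dist xB p) ∪ h '' Set.Icc 0 (dist p xA)).Nonempty :=
    ⟨g 0, Or.inl ⟨0, ⟨le_refl 0, dist_nonneg⟩, rfl⟩⟩
  have hlt : infDist (f t)
      (g '' Set.Icc 0 (dist xB p) ∪ h '' Set.Icc 0 (dist p xA)) < d + ε / 2 :=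
    lt_of_le_of_lt hinf (by linarith)
  obtain ⟨q, hqS, hq⟩ := (infDist_lt_iff hSne).mp hlt
  -- distances from f t to the endpoints
  obtain ⟨hf0, hfD, hfiso⟩ := hf
  have hxAft : dist xA (f t) = t := by
    have := hfiso 0 ⟨le_refl 0, hDnn⟩ t htmem
    rw [hf0] at this
    rw [this, zero_sub, abs_neg, abs_of_nonneg htmem.1]
  have hftxB : dist (f t) xB = D - t := by
    have := hfiso t htmem D ⟨hDnn, le_refl D⟩
    rw [hfD] at this
    rw [this, abs_of_nonpos (by linarith [htmem.2]), neg_sub]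
  rcases hqS with hqg | hqh
  · -- q is on the side from xB to p
    obtain ⟨u, humem, hqu⟩ := hqg
    obtain ⟨hg0, hgP, hgiso⟩ := hg
    have hxBq : dist xB q = u := by
      have := hgiso 0 ⟨le_refl 0, dist_nonneg⟩ u humem
      rw [hg0, hqu] at this
      rw [this, zero_sub, abs_neg, abs_of_nonneg humem.1]
    have hqp : dist q p = dist xB p - u := by
      have := hgiso u humem (dist xB p) ⟨dist_nonneg, le_refl _⟩
      rw [hgP, hqu] at this
      rw [this, abs_of_nonpos (by linarith [humem.2]), neg_sub]
    have h1 : dist xA q ≤ dist xA (f t) + dist (f t) q := dist_triangle _ _ _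
    have h2 : dist xA p ≤ dist xA q + dist q p := dist_triangle _ _ _
    have h3 : dist xB (f t) ≤ dist xB q + dist q (f t) := dist_triangle _ _ _
    rw [dist_comm xB (f t), hftxB, hxBq, dist_comm q (f t)] at h3
    rw [hxAft] at h1
    linarith
  · -- q is on the side from p to xA, hence on LA
    obtain ⟨u, _, hqu⟩ := hqh
    have hqLA : q ∈ Set.range LA := hqu ▸ hhL u
    have h1 : D ≤ dist q xB := hmin q hqLA xB hxB
    have h2 : dist q xB ≤ dist q (f t) + dist (f t) xB := dist_triangle _ _ _
    rw [dist_comm q (f t)] at h2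
    linarith

/-- Gromov products at the closest points of two quasi-invariant axes.
If `L_A`, `L_B` are geodesic lines quasi-invariant (up to `2δ`) under `A, A⁻¹` and
`B, B⁻¹` respectively, and `x_A ∈ L_A`, `x_B ∈ L_B` realize the distance between the
two lines, then the four Gromov products `(x_B | A x_A)_{x_A}`, `(x_A | A x_B)_{A x_A}`,
`(x_A | B x_B)_{x_B}` and `(x_B | B x_A)_{B x_B}` are all at most `8δ`. -/
theorem gromov_products_at_closest_points
    {X : Type*} [MetricSpace X] (δ : ℝ) (hδ : 0 ≤ δ)
    (hgeo : GeodesicMetricSpace X) (hhyp : RipsHyperbolic X δ)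
    (A B : X ≃ᵢ X) (LA LB : ℝ → X)
    (hLA : IsGeodesicLine LA) (hLB : IsGeodesicLine LB)
    (hAinv : ∀ x ∈ Set.range LA,
      infDist (A x) (Set.range LA) ≤ 2 * δ ∧ infDist (A⁻¹ x) (Set.range LA) ≤ 2 * δ)
    (hBinv : ∀ x ∈ Set.range LB,
      infDist (B x) (Set.range LB) ≤ 2 * δ ∧ infDist (B⁻¹ x) (Set.range LB) ≤ 2 * δ)
    (xA xB : X) (hxA : xA ∈ Set.range LA) (hxB : xB ∈ Set.range LB)
    (hmin : ∀ p ∈ Set.range LA, ∀ q ∈ Set.range LB, dist xA xB ≤ dist p q) :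
    gromovProd xB (A xA) xA ≤ 8 * δ ∧ gromovProd xA (A xB) (A xA) ≤ 8 * δ ∧
      gromovProd xA (B xB) xB ≤ 8 * δ ∧ gromovProd xB (B xA) (B xB) ≤ 8 * δ := by
  have hLAne : (Set.range LA).Nonempty := ⟨LA 0, 0, rfl⟩
  have hLBne : (Set.range LB).Nonempty := ⟨LB 0, 0, rfl⟩
  have hmin' : ∀ p ∈ Set.range LB, ∀ q ∈ Set.range LA, dist xB xA ≤ dist p q := by
    intro p hp q hq
    rw [dist_comm xB xA, dist_comm p q]
    exact hmin q hq p hp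
  -- generic bound: if y is within 2δ of LA then (xB|y)_{xA} ≤ 4δ
  have mainA : ∀ y : X, infDist y (Set.range LA) ≤ 2 * δ → gromovProd xB y xA ≤ 4 * δ := by
    intro y hy
    refine le_of_forall_pos_le_add fun ε hε => ?_
    obtain ⟨p, hpLA, hyp⟩ := (infDist_lt_iff hLAne).mp
      (lt_of_le_of_lt hy (by linarith : 2 * δ < 2 * δ + ε))
    have h1 := gromovProd_lipschitz' xB y p xA
    have h2 := key_gromov' hgeo hhyp hLA hxA hxB hmin hpLA
    linarith
  have mainB : ∀ y : X, infDist y (Set.range LB) ≤ 2 * δ → gromovProd xA y xB ≤ 4 * δ := by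
    intro y hy
    refine le_of_forall_pos_le_add fun ε hε => ?_
    obtain ⟨p, hpLB, hyp⟩ := (infDist_lt_iff hLBne).mp
      (lt_of_le_of_lt hy (by linarith : 2 * δ < 2 * δ + ε))
    have h1 := gromovProd_lipschitz' xA y p xB
    have h2 := key_gromov' hgeo hhyp hLB hxB hxA hmin' hpLB
    linarith
  refine ⟨?_, ?_, ?_, ?_⟩
  · linarith [mainA (A xA) (hAinv xA hxA).1]
  · have heq : gromovProd xA (A xB) (A xA) = gromovProd xB (A⁻¹ xA) xA := by
      have e1 : dist (A⁻¹ (A xA)) (A⁻¹ xA) = dist (A xA) xA := (A⁻¹).dist_eq _ _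
      simp only [IsometryEquiv.inv_apply_self] at e1
      have e2 : dist (A xA) (A xB) = dist xA xB := A.dist_eq _ _
      have e3 : dist (A⁻¹ xA) (A⁻¹ (A xB)) = dist xA (A xB) := (A⁻¹).dist_eq _ _
      simp only [IsometryEquiv.inv_apply_self] at e3
      unfold gromovProd
      rw [dist_comm xB (A⁻¹ xA)]
      linarith [e1, e2, e3]
    rw [heq]
    linarith [mainA (A⁻¹ xA) (hAinv xA hxA).2]
  · linarith [mainB (B xB) (hBinv xB hxB).1]
  · have heq : gromovProd xB (B xA) (B xB) = gromovProd xA (B⁻¹ xB) xB := by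
      have e1 : dist (B⁻¹ (B xB)) (B⁻¹ xB) = dist (B xB) xB := (B⁻¹).dist_eq _ _
      simp only [IsometryEquiv.inv_apply_self] at e1
      have e2 : dist (B xB) (B xA) = dist xB xA := B.dist_eq _ _
      have e3 : dist (B⁻¹ xB) (B⁻¹ (B xA)) = dist xB (B xA) := (B⁻¹).dist_eq _ _
      simp only [IsometryEquiv.inv_apply_self] at e3
      unfold gromovProd
      rw [dist_comm xA (B⁻¹ xB)]
      linarith [e1, e2, e3]
    rw [heq]
    linarith [mainB (B⁻¹ xB) (hBinv xB hxB).2]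
end
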